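/- Let M_n^{(k)} denote the number of sequences (h_0, …, h_n) of integers with h_0 = h_n = 0, 0 ≤ h_i ≤ k for all i, and h_{i+1} − h_i ∈ {−1, 0, 1} for all i (Motzkin paths from (0,0) to (n,0) with steps (1,1), (1,0), (1,−1) staying weakly between the lines y = 0 and y = k). For all positive integers n and k with k ≡ 1 (mod 3), det(M_{n+i+j}^{(k)})_{0≤i,j≤k−1} = (−1)^{n⌊(k+1)/3⌋} ((2k+4)/3)^{n−1}, where (2k+4)/3 is an integer since k ≡ 1 (mod 3). -/

import Mathlib

/-- Number of Motzkin paths of length `n` from height `0` to height `0` with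
steps `(1,1)`, `(1,0)`, `(1,−1)` staying weakly between `y = 0` and `y = k`. -/
noncomputable def motzkinCount (k n : ℕ) : ℕ :=
  Nat.card {h : Fin (n + 1) → ℤ //
    h 0 = 0 ∧ h (Fin.last n) = 0 ∧
    (∀ i, 0 ≤ h i ∧ h i ≤ k) ∧
    (∀ i : Fin n, h i.succ - h i.castSucc = -1 ∨ h i.succ - h i.castSucc = 0 ∨
      h i.succ - h i.castSucc = 1)}

namespace S17
open Matrix


def tf (a b : ℕ) : ℤ :=
  (if b = a + 1 then 1 else 0) + (if a = b then 1 else 0) + (if a = b + 1 then 1 else 0)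

def Sh (K : ℕ) : Matrix (Fin K) (Fin K) ℤ :=
  Matrix.of fun i j => if (j : ℕ) = (i : ℕ) + 1 then 1 else 0

def T (K : ℕ) : Matrix (Fin K) (Fin K) ℤ := Sh K + 1 + (Sh K)ᵀ

lemma T_apply {K : ℕ} (i j : Fin K) : T K i j = tf (i : ℕ) (j : ℕ) := by
  simp [T, Sh, tf, Matrix.one_apply, Matrix.add_apply, Matrix.transpose_apply, Fin.ext_iff]

lemma tf_succ (a b : ℕ) : tf (a + 1) (b + 1) = tf a b := by
  simp only [tf, add_left_inj]

lemma T_symm (K : ℕ) : (T K)ᵀ = T K := by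
  ext i j
  simp only [Matrix.transpose_apply, T_apply, tf]
  split_ifs <;> omega

lemma detT_zero : (T 0).det = 1 := Matrix.det_fin_zero

lemma detT_one : (T 1).det = 1 := by
  rw [Matrix.det_fin_one]
  simp [T_apply, tf]

lemma detT_rec (m : ℕ) : (T (m + 2)).det = (T (m + 1)).det - (T m).det := by
  rw [show (m + 2) = (m + 1) + 1 from rfl, Matrix.det_succ_column_zero]
  rw [Fin.sum_univ_succ, Fin.sum_univ_succ]
  have hzero : ∀ i : Fin m, T (m + 2) i.succ.succ 0 = 0 := by
    intro i
    simp [T_apply, tf, Fin.ext_iff]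
  have h2 : ∀ i : Fin m,
      (-1 : ℤ) ^ ((i.succ.succ : Fin (m+2)) : ℕ) * T (m + 2) i.succ.succ 0 *
        ((T (m+2)).submatrix i.succ.succ.succAbove Fin.succ).det = 0 := by
    intro i; rw [hzero]; ring
  rw [Finset.sum_eq_zero (fun i _ => h2 i), add_zero]
  have hA : (T (m + 2)).submatrix (Fin.succAbove 0) Fin.succ = T (m + 1) := by
    rw [Fin.succAbove_zero]
    ext i j
    simp only [Matrix.submatrix_apply, T_apply, Fin.val_succ]
    exact tf_succ _ _
  have h00 : T (m + 2) 0 0 = 1 := by simp [T_apply, tf]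
  have h10 : T (m + 2) (Fin.succ 0) 0 = 1 := by simp [T_apply, tf]
  rw [hA, h00, h10]
  -- second minor
  have hB : ((T (m + 2)).submatrix (Fin.succ (0 : Fin (m+1))).succAbove Fin.succ).det
      = (T m).det := by
    rw [Matrix.det_succ_row_zero]
    rw [Fin.sum_univ_succ]
    have hz : ∀ j : Fin m,
        (T (m + 2)).submatrix (Fin.succ (0 : Fin (m+1))).succAbove Fin.succ 0 j.succ = 0 := by
      intro j
      have h1 : ((Fin.succ (0 : Fin (m+1))).succAbove 0 : ℕ) = 0 := by
        simp [Fin.succAbove, Fin.lt_def]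
      simp only [Matrix.submatrix_apply, T_apply]
      rw [h1]
      simp [tf, Fin.ext_iff]
    have h2 : ∀ j : Fin m,
        (-1 : ℤ) ^ ((j.succ : Fin (m+1)) : ℕ) *
          (T (m + 2)).submatrix (Fin.succ (0 : Fin (m+1))).succAbove Fin.succ 0 j.succ *
          (((T (m + 2)).submatrix (Fin.succ (0 : Fin (m+1))).succAbove Fin.succ).submatrix
            Fin.succ j.succ.succAbove).det = 0 := by
      intro j; rw [hz]; ring
    rw [Finset.sum_eq_zero (fun i _ => h2 i), add_zero]
    have hentry : (T (m + 2)).submatrix (Fin.succ (0 : Fin (m+1))).succAbove Fin.succ 0 0 = 1 := by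
      have h1 : ((Fin.succ (0 : Fin (m+1))).succAbove 0 : ℕ) = 0 := by
        simp [Fin.succAbove, Fin.lt_def]
      simp only [Matrix.submatrix_apply, T_apply]
      rw [h1]
      simp [tf]
    rw [hentry]
    have hsub : ((T (m + 2)).submatrix (Fin.succ (0 : Fin (m+1))).succAbove Fin.succ).submatrix
        Fin.succ (Fin.succAbove 0) = T m := by
      rw [Fin.succAbove_zero]
      ext i j
      have hv : ((Fin.succ (0 : Fin (m+1))).succAbove i.succ : ℕ) = (i : ℕ) + 2 := by
        simp [Fin.succAbove, Fin.lt_def]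
      simp only [Matrix.submatrix_apply, T_apply]
      rw [hv]
      simp only [Fin.val_succ]
      rw [show (i:ℕ) + 2 = ((i:ℕ) + 1) + 1 from rfl, tf_succ, tf_succ]
    rw [hsub]
    simp
  rw [hB]
  simp only [Fin.val_zero, Fin.val_succ, Fin.val_zero, pow_zero, pow_one]
  ring

lemma detT_per (m : ℕ) : (T (m + 3)).det = -(T m).det := by
  have h1 := detT_rec (m + 1)
  have h2 := detT_rec m
  rw [show m + 3 = (m + 1) + 2 from rfl, h1, h2]
  ring

lemma detT_31 (t : ℕ) : (T (3 * t + 1)).det = (-1) ^ t := by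
  induction t with
  | zero => simpa using detT_one
  | succ t ih =>
    have : 3 * (t + 1) + 1 = (3 * t + 1) + 3 := by ring
    rw [this, detT_per, ih]
    ring

def wv (m : ℕ) : ℤ := if m % 3 = 0 then 1 else if m % 3 = 1 then -1 else 0

lemma wv_three (m : ℕ) : wv m + wv (m + 1) + wv (m + 2) = 0 := by
  have h : m % 3 = 0 ∨ m % 3 = 1 ∨ m % 3 = 2 := by omega
  have h1 : (m + 1) % 3 = (m % 3 + 1) % 3 := by omega
  have h2 : (m + 2) % 3 = (m % 3 + 2) % 3 := by omega
  rcases h with h | h | h <;> simp [wv, h1, h2, h]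

lemma Sh_mulVec {K : ℕ} (x : Fin K → ℤ) (i : Fin K) :
    (Sh K).mulVec x i = if h : (i : ℕ) + 1 < K then x ⟨(i : ℕ) + 1, h⟩ else 0 := by
  simp only [Matrix.mulVec, dotProduct, Sh, Matrix.of_apply, ite_mul, one_mul, zero_mul]
  split
  · rename_i h
    rw [Finset.sum_eq_single (⟨(i : ℕ) + 1, h⟩ : Fin K)]
    · simp
    · intro b _ hb
      rw [if_neg]
      intro hb'
      exact hb (Fin.ext hb')
    · simp
  · rename_i h
    apply Finset.sum_eq_zero
    intro b _
    rw [if_neg]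
    intro hb
    exact h (hb ▸ b.isLt)

lemma ShT_mulVec {K : ℕ} (x : Fin K → ℤ) (i : Fin K) :
    (Sh K)ᵀ.mulVec x i = if h : 0 < (i : ℕ) then x ⟨(i : ℕ) - 1, by omega⟩ else 0 := by
  simp only [Matrix.mulVec, dotProduct, Sh, Matrix.transpose_apply, Matrix.of_apply,
    ite_mul, one_mul, zero_mul]
  split
  · rename_i h
    rw [Finset.sum_eq_single (⟨(i : ℕ) - 1, by omega⟩ : Fin K)]
    · rw [if_pos]; simp; omega
    · intro b _ hb
      rw [if_neg]
      intro hb'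
      exact hb (Fin.ext (show (b : ℕ) = (i : ℕ) - 1 by omega))
    · simp
  · rename_i h
    apply Finset.sum_eq_zero
    intro b _
    rw [if_neg]
    omega

lemma T_mulVec {K : ℕ} (x : Fin K → ℤ) (i : Fin K) :
    (T K).mulVec x i = (if h : (i : ℕ) + 1 < K then x ⟨(i : ℕ) + 1, h⟩ else 0) + x i
      + (if h : 0 < (i : ℕ) then x ⟨(i : ℕ) - 1, by omega⟩ else 0) := by
  simp only [T, Matrix.add_mulVec, Pi.add_apply, Matrix.one_mulVec, Sh_mulVec, ShT_mulVec]

variable {k : ℕ}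

lemma T_mulVec_wv (hk : 1 ≤ k) (hk3 : k % 3 = 1) :
    (T (k + 1)).mulVec (fun i => wv (i : ℕ)) = 0 := by
  funext i
  rw [T_mulVec]
  simp only [Pi.zero_apply]
  rcases Nat.lt_or_ge (i : ℕ) 1 with hi | hi
  · have hi0 : (i : ℕ) = 0 := by omega
    rw [dif_pos (by omega), dif_neg (by omega)]
    show wv ((i : ℕ) + 1) + wv (i : ℕ) + 0 = 0
    rw [hi0]
    simp [wv]
  · rcases Nat.lt_or_ge (i : ℕ) k with hik | hik
    · rw [dif_pos (by omega), dif_pos (by omega)]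
      have := wv_three ((i : ℕ) - 1)
      have e1 : (i : ℕ) - 1 + 1 = (i : ℕ) := by omega
      have e2 : (i : ℕ) - 1 + 2 = (i : ℕ) + 1 := by omega
      rw [e1, e2] at this
      show wv ((i : ℕ) + 1) + wv (i : ℕ) + wv ((i : ℕ) - 1) = 0
      linarith
    · have hik' : (i : ℕ) = k := by omega
      rw [dif_neg (by omega), dif_pos (by omega)]
      have h1 : wv (i : ℕ) = -1 := by simp [wv, hik', hk3]
      have h2 : wv ((i : ℕ) - 1) = 1 := by
        have : ((i : ℕ) - 1) % 3 = 0 := by omega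
        simp [wv, this]
      show (0 : ℤ) + wv (i : ℕ) + wv ((i : ℕ) - 1) = 0
      rw [h1, h2]
      ring

def blk (A : Matrix (Fin (k + 1)) (Fin (k + 1)) ℤ) : Matrix (Fin k) (Fin k) ℤ :=
  A.submatrix Fin.castSucc Fin.castSucc

lemma blk_T : blk (T (k + 1)) = T k := by
  ext i j
  simp [blk, T, Sh, Matrix.one_apply, Fin.ext_iff]

def wv' (k : ℕ) : Fin k → ℤ := fun i => wv (i : ℕ)

lemma blk_mul (hk3 : k % 3 = 1) (A B : Matrix (Fin (k + 1)) (Fin (k + 1)) ℤ)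
    (hA : A.mulVec (fun i => wv (i : ℕ)) = 0)
    (hB : Matrix.vecMul (fun i : Fin (k+1) => wv (i : ℕ)) B = 0) :
    blk (A * B) = blk A * (1 + Matrix.vecMulVec (wv' k) (wv' k)) * blk B := by
  have hwk : wv k = -1 := by simp [wv, hk3]
  ext i j
  have hAi : A i.castSucc (Fin.last k) = ∑ b : Fin k, A i.castSucc b.castSucc * wv (b : ℕ) := by
    have h0 := congrFun hA i.castSucc
    simp only [Matrix.mulVec, dotProduct, Pi.zero_apply] at h0
    rw [Fin.sum_univ_castSucc] at h0
    simp only [Fin.coe_castSucc, Fin.val_last, hwk] at h0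
    linarith
  have hBj : B (Fin.last k) j.castSucc = ∑ b : Fin k, wv (b : ℕ) * B b.castSucc j.castSucc := by
    have h0 := congrFun hB j.castSucc
    simp only [Matrix.vecMul, dotProduct, Pi.zero_apply] at h0
    rw [Fin.sum_univ_castSucc] at h0
    simp only [Fin.coe_castSucc, Fin.val_last, hwk] at h0
    linarith
  have hL : blk (A * B) i j
      = (∑ b : Fin k, A i.castSucc b.castSucc * B b.castSucc j.castSucc)
        + A i.castSucc (Fin.last k) * B (Fin.last k) j.castSucc := by
    simp only [blk, Matrix.submatrix_apply, Matrix.mul_apply]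
    rw [Fin.sum_univ_castSucc]
  rw [hL, hAi, hBj]
  have hR : (blk A * (1 + Matrix.vecMulVec (wv' k) (wv' k)) * blk B) i j
      = (∑ b : Fin k, A i.castSucc b.castSucc * B b.castSucc j.castSucc)
        + (∑ a : Fin k, A i.castSucc a.castSucc * wv (a : ℕ)) *
          (∑ b : Fin k, wv (b : ℕ) * B b.castSucc j.castSucc) := by
    rw [mul_add, mul_one, add_mul]
    simp only [Matrix.add_apply, Matrix.mul_apply, blk, Matrix.submatrix_apply,
      Matrix.vecMulVec_apply, wv']
    congr 1
    rw [Finset.sum_mul_sum]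
    rw [Finset.sum_comm]
    apply Finset.sum_congr rfl
    intro b _
    rw [Finset.sum_mul]
    apply Finset.sum_congr rfl
    intro a _
    ring
  rw [hR]

lemma sum_wv_sq (t : ℕ) : ∑ m ∈ Finset.range (3 * t + 1), wv m * wv m = 2 * t + 1 := by
  induction t with
  | zero => simp [wv]
  | succ t ih =>
    have h3 : 3 * (t + 1) + 1 = (3 * t + 1) + 1 + 1 + 1 := by ring
    rw [h3, Finset.sum_range_succ, Finset.sum_range_succ, Finset.sum_range_succ, ih]
    have e1 : (3 * t + 1) % 3 = 1 := by omega
    have e2 : (3 * t + 1 + 1) % 3 = 2 := by omega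
    have e3 : (3 * t + 1 + 1 + 1) % 3 = 0 := by omega
    simp only [wv, e1, e2, e3]
    norm_num
    push_cast
    ring

lemma dot_wv (hk3 : k % 3 = 1) :
    dotProduct (wv' k) (wv' k) = ((2 * (k / 3) + 1 : ℕ) : ℤ) := by
  obtain ⟨t, rfl⟩ : ∃ t, k = 3 * t + 1 := ⟨k / 3, by omega⟩
  have ht : (3 * t + 1) / 3 = t := by omega
  rw [ht]
  simp only [dotProduct, wv']
  rw [Fin.sum_univ_eq_sum_range (fun m => wv m * wv m), sum_wv_sq]
  push_cast
  ring

lemma det_one_add (hk3 : k % 3 = 1) :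
    (1 + Matrix.vecMulVec (wv' k) (wv' k)).det = ((2 * (k / 3) + 2 : ℕ) : ℤ) := by
  rw [Matrix.vecMulVec_eq Unit, Matrix.det_one_add_replicateCol_mul_replicateRow, dot_wv hk3]
  push_cast
  ring




variable (k : ℕ)

def PathSet (n : ℕ) (j : ℤ) : Type :=
  {h : Fin (n + 1) → ℤ //
    h 0 = 0 ∧ h (Fin.last n) = j ∧
    (∀ i, 0 ≤ h i ∧ h i ≤ k) ∧
    (∀ i : Fin n, h i.succ - h i.castSucc = -1 ∨ h i.succ - h i.castSucc = 0 ∨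
      h i.succ - h i.castSucc = 1)}

instance (n : ℕ) (j : ℤ) : Finite (PathSet k n j) := by
  apply Finite.of_injective
    (fun h : PathSet k n j => (fun i => (⟨(h.1 i).toNat, by
      have := h.2.2.2.1 i; omega⟩ : Fin (k + 1)) : Fin (n + 1) → Fin (k + 1)))
  intro a b hab
  apply Subtype.ext
  funext i
  have := congrFun hab i
  rw [Fin.mk.injEq] at this
  have ha := (a.2.2.2.1 i).1
  have hb := (b.2.2.2.1 i).1
  omega

noncomputable def N (n : ℕ) (j : ℤ) : ℕ := Nat.card (PathSet k n j)

lemma motzkinCount_eq_N (n : ℕ) : motzkinCount k n = N k n 0 := rfl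

lemma N_out {n : ℕ} {j : ℤ} (h : j < 0 ∨ (k : ℤ) < j) : N k n j = 0 := by
  have : IsEmpty (PathSet k n j) := by
    constructor
    intro p
    have h1 := p.2.2.1
    have h2 := p.2.2.2.1 (Fin.last n)
    omega
  exact Nat.card_of_isEmpty

instance : Unique (PathSet k 0 0) where
  default := ⟨fun _ => 0, rfl, rfl, fun _ => ⟨le_refl _, by positivity⟩, fun i => i.elim0⟩
  uniq := by
    intro p
    apply Subtype.ext
    funext i
    have h0 := p.2.1
    have : i = 0 := Fin.ext (Nat.lt_one_iff.mp i.isLt)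
    rw [this, h0]

lemma N_zero : N k 0 0 = 1 := Nat.card_unique

lemma N_zero_ne {j : ℤ} (hj : j ≠ 0) : N k 0 j = 0 := by
  have : IsEmpty (PathSet k 0 j) := by
    constructor
    intro p
    have h0 := p.2.1
    have h1 : p.1 0 = j := p.2.2.1
    rw [h0] at h1
    exact hj h1.symm
  exact Nat.card_of_isEmpty

variable {k}

/-- Truncate a path of length `n+1` to length `n`. -/
def truncFun {n : ℕ} {j : ℤ} (h : PathSet k (n + 1) j) (m : ℤ)
    (hm : h.1 ((Fin.last n).castSucc) = m) : PathSet k n m :=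
  ⟨h.1 ∘ Fin.castSucc, by
    constructor
    · show h.1 ((0 : Fin (n+1)).castSucc) = 0
      rw [Fin.castSucc_zero]
      exact h.2.1
    refine ⟨hm, fun i => h.2.2.2.1 _, fun i => ?_⟩
    have := h.2.2.2.2 i.castSucc
    show h.1 (i.succ.castSucc) - h.1 (i.castSucc.castSucc) = -1 ∨ _ ∨ _
    rwa [← Fin.succ_castSucc]⟩

/-- Extend a path of length `n` by one step to height `j`. -/
def extendFun {n : ℕ} (m : ℤ) (j : ℤ) (p : PathSet k n m) (hj0 : 0 ≤ j) (hjk : j ≤ (k : ℤ))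
    (hd : j - m = -1 ∨ j - m = 0 ∨ j - m = 1) : PathSet k (n + 1) j :=
  ⟨Fin.snoc p.1 j, by
    refine ⟨?_, ?_, ?_, ?_⟩
    · rw [show (0 : Fin (n+1+1)) = (0 : Fin (n+1)).castSucc by rfl, Fin.snoc_castSucc]
      exact p.2.1
    · exact Fin.snoc_last _ _
    · intro i
      induction i using Fin.lastCases with
      | last => rw [Fin.snoc_last]; exact ⟨hj0, hjk⟩
      | cast i => rw [Fin.snoc_castSucc]; exact p.2.2.2.1 i
    · intro i
      induction i using Fin.lastCases with
      | last =>
        rw [Fin.succ_last, Fin.snoc_last, Fin.snoc_castSucc, p.2.2.1]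
        exact hd
      | cast i =>
        rw [Fin.succ_castSucc, Fin.snoc_castSucc, Fin.snoc_castSucc]
        exact p.2.2.2.2 i⟩

lemma extend_trunc {n : ℕ} {j : ℤ} (h : PathSet k (n + 1) j) (m : ℤ)
    (hm : h.1 ((Fin.last n).castSucc) = m) (hj0 : 0 ≤ j) (hjk : j ≤ (k : ℤ)) (hd) :
    extendFun m j (truncFun h m hm) hj0 hjk hd = h := by
  apply Subtype.ext
  have hc : (extendFun m j (truncFun h m hm) hj0 hjk hd).1
      = Fin.snoc (h.1 ∘ Fin.castSucc) j := rfl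
  rw [hc]
  funext i
  induction i using Fin.lastCases with
  | last => rw [Fin.snoc_last, h.2.2.1]
  | cast i => rw [Fin.snoc_castSucc]; rfl

lemma trunc_extend {n : ℕ} (m : ℤ) (j : ℤ) (p : PathSet k n m) (hj0) (hjk) (hd)
    (hm : (extendFun m j p hj0 hjk hd).1 ((Fin.last n).castSucc) = m) :
    truncFun (extendFun m j p hj0 hjk hd) m hm = p := by
  apply Subtype.ext
  have hc : (truncFun (extendFun m j p hj0 hjk hd) m hm).1
      = (Fin.snoc p.1 j : Fin (n+1+1) → ℤ) ∘ Fin.castSucc := rfl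
  rw [hc]
  funext i
  simp only [Function.comp_apply, Fin.snoc_castSucc]

lemma extend_pen {n : ℕ} (m : ℤ) (j : ℤ) (p : PathSet k n m) (hj0) (hjk) (hd) :
    (extendFun m j p hj0 hjk hd).1 ((Fin.last n).castSucc) = m := by
  have hc : (extendFun m j p hj0 hjk hd).1 = (Fin.snoc p.1 j : Fin (n+1+1) → ℤ) := rfl
  rw [hc, Fin.snoc_castSucc]
  exact p.2.2.1

def splitEquiv (n : ℕ) (j : ℤ) (hj0 : 0 ≤ j) (hjk : j ≤ (k : ℤ)) :
    PathSet k (n + 1) j ≃ (PathSet k n (j - 1) ⊕ PathSet k n j) ⊕ PathSet k n (j + 1) where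
  toFun h :=
    if h1 : h.1 ((Fin.last n).castSucc) = j - 1 then .inl (.inl (truncFun h (j - 1) h1))
    else if h2 : h.1 ((Fin.last n).castSucc) = j then .inl (.inr (truncFun h j h2))
    else .inr (truncFun h (j + 1) (by
      have := h.2.2.2.2 (Fin.last n)
      rw [Fin.succ_last, h.2.2.1] at this
      omega))
  invFun s :=
    match s with
    | .inl (.inl p) => extendFun (j - 1) j p hj0 hjk (by omega)
    | .inl (.inr p) => extendFun j j p hj0 hjk (by omega)
    | .inr p => extendFun (j + 1) j p hj0 hjk (by omega)
  left_inv h := by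
    by_cases h1 : h.1 ((Fin.last n).castSucc) = j - 1
    · simp only [dif_pos h1]
      exact extend_trunc h (j - 1) h1 hj0 hjk _
    · by_cases h2 : h.1 ((Fin.last n).castSucc) = j
      · simp only [dif_neg h1, dif_pos h2]
        exact extend_trunc h j h2 hj0 hjk _
      · simp only [dif_neg h1, dif_neg h2]
        exact extend_trunc h (j + 1) _ hj0 hjk _
  right_inv s := by
    match s with
    | .inl (.inl p) =>
      simp only
      rw [dif_pos (extend_pen (j - 1) j p hj0 hjk _)]
      rw [trunc_extend]
    | .inl (.inr p) =>
      simp only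
      rw [dif_neg (by rw [extend_pen]; omega), dif_pos (extend_pen j j p hj0 hjk _)]
      rw [trunc_extend]
    | .inr p =>
      simp only
      rw [dif_neg (by rw [extend_pen]; omega), dif_neg (by rw [extend_pen]; omega)]
      rw [trunc_extend]

lemma N_rec (n : ℕ) (j : ℤ) (hj0 : 0 ≤ j) (hjk : j ≤ (k : ℤ)) :
    N k (n + 1) j = (N k n (j - 1) + N k n j) + N k n (j + 1) := by
  unfold N
  rw [Nat.card_congr (splitEquiv n j hj0 hjk), Nat.card_sum, Nat.card_sum]


end S17
namespace S17
open Matrix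

variable {k : ℕ}

lemma N_vec (n : ℕ) :
    (fun j : Fin (k + 1) => (N k n ((j : ℕ) : ℤ) : ℤ))
      = ((T (k + 1)) ^ n).mulVec (Pi.single (0 : Fin (k + 1)) 1) := by
  induction n with
  | zero =>
    rw [pow_zero, Matrix.one_mulVec]
    funext j
    by_cases hj : j = 0
    · subst hj
      rw [Pi.single_eq_same]
      norm_num [N_zero]
    · rw [Pi.single_eq_of_ne hj]
      have hj' : ((j : ℕ) : ℤ) ≠ 0 := by
        simp only [ne_eq, Nat.cast_eq_zero]
        intro h
        exact hj (Fin.ext h)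
      rw [N_zero_ne k hj']
      norm_num
  | succ n ih =>
    rw [pow_succ', ← Matrix.mulVec_mulVec, ← ih]
    funext j
    rw [T_mulVec]
    have hcast : ∀ (a : ℕ) (h : a < k + 1),
        (N k n (((⟨a, h⟩ : Fin (k+1)) : ℕ) : ℤ) : ℤ) = (N k n (a : ℤ) : ℤ) := fun a h => rfl
    have hrec := N_rec (k := k) n ((j : ℕ) : ℤ) (by positivity) (by
      have := j.isLt; exact_mod_cast Nat.lt_succ_iff.mp this)
    rcases Nat.lt_or_ge ((j : ℕ) + 1) (k + 1) with hlt | hge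
    · rw [dif_pos hlt]
      rcases Nat.lt_or_ge 0 (j : ℕ) with hpos | hz
      · rw [dif_pos hpos, hcast ((j : ℕ) + 1) hlt, hcast ((j : ℕ) - 1) (by omega)]
        have e1 : (((j : ℕ) + 1 : ℕ) : ℤ) = ((j : ℕ) : ℤ) + 1 := by push_cast; ring
        have e2 : (((j : ℕ) - 1 : ℕ) : ℤ) = ((j : ℕ) : ℤ) - 1 := by
          have h1 : 1 ≤ (j : ℕ) := hpos
          push_cast [h1]; ring
        rw [e1, e2, hrec]
        push_cast
        ring
      · rw [dif_neg (by omega), hcast ((j : ℕ) + 1) hlt]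
        have e1 : (((j : ℕ) + 1 : ℕ) : ℤ) = ((j : ℕ) : ℤ) + 1 := by push_cast; ring
        have e3 : N k n (((j : ℕ) : ℤ) - 1) = 0 := by
          apply N_out; left; omega
        rw [e1, hrec, e3]
        push_cast
        ring
    · rw [dif_neg (by omega)]
      rcases Nat.lt_or_ge 0 (j : ℕ) with hpos | hz
      · rw [dif_pos hpos, hcast ((j : ℕ) - 1) (by omega)]
        have e2 : (((j : ℕ) - 1 : ℕ) : ℤ) = ((j : ℕ) : ℤ) - 1 := by
          have h1 : 1 ≤ (j : ℕ) := hpos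
          push_cast [h1]; ring
        have e3 : N k n (((j : ℕ) : ℤ) + 1) = 0 := by
          apply N_out; right
          have : (j : ℕ) = k := by omega
          omega
        rw [e2, hrec, e3]
        push_cast
        ring
      · rw [dif_neg (by omega)]
        have e3 : N k n (((j : ℕ) : ℤ) + 1) = 0 := by
          apply N_out; right
          have : (j : ℕ) = k := by omega
          omega
        have e4 : N k n (((j : ℕ) : ℤ) - 1) = 0 := by
          apply N_out; left; omega
        rw [hrec, e3, e4]
        push_cast
        ring

lemma N_eq_T (n : ℕ) (j : Fin (k + 1)) :
    (N k n ((j : ℕ) : ℤ) : ℤ) = ((T (k + 1)) ^ n) j 0 := by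
  have h := congrFun (N_vec (k := k) n) j
  rw [h, Matrix.mulVec_single]
  exact mul_one _

lemma motzkin_eq_T (n : ℕ) : ((motzkinCount k n : ℕ) : ℤ) = ((T (k + 1)) ^ n) 0 0 := by
  rw [motzkinCount_eq_N]
  have h := N_eq_T (k := k) n 0
  simpa using h

lemma T_pow_apply_zero {m : ℕ} {a : Fin (k + 1)} (h : m < (a : ℕ)) :
    ((T (k + 1)) ^ m) a 0 = 0 := by
  induction m generalizing a with
  | zero =>
    rw [pow_zero]
    apply Matrix.one_apply_ne
    intro h0
    rw [h0] at h
    simp at h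
  | succ m ih =>
    rw [pow_succ', Matrix.mul_apply]
    apply Finset.sum_eq_zero
    intro b _
    rcases Nat.lt_or_ge m (b : ℕ) with hb | hb
    · rw [ih hb, mul_zero]
    · have hT : T (k + 1) a b = 0 := by
        rw [T_apply, tf]
        rw [if_neg (by omega), if_neg (by omega), if_neg (by omega)]
        ring
      rw [hT, zero_mul]

lemma T_pow_apply_one {m : ℕ} (hm : m ≤ k) :
    ((T (k + 1)) ^ m) ⟨m, by omega⟩ 0 = 1 := by
  induction m with
  | zero =>
    rw [pow_zero]
    exact Matrix.one_apply_eq _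
  | succ m ih =>
    rw [pow_succ', Matrix.mul_apply]
    rw [Finset.sum_eq_single (⟨m, by omega⟩ : Fin (k + 1))]
    · have ht1 : tf (m + 1) m = 1 := by
        rw [tf, if_neg (by omega), if_neg (by omega), if_pos (by omega)]
        ring
      have h1 : T (k + 1) ⟨m + 1, by omega⟩ ⟨m, by omega⟩ = 1 := by
        rw [T_apply]
        exact ht1
      rw [h1, ih (by omega), one_mul]
    · intro b _ hb
      rcases Nat.lt_or_ge m (b : ℕ) with h | h
      · rw [T_pow_apply_zero h, mul_zero]
      · have hbm : (b : ℕ) < m := by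
          rcases Nat.lt_or_ge (b : ℕ) m with h' | h'
          · exact h'
          · exact absurd (Fin.ext (by omega : (b : ℕ) = m)) hb
        have ht0 : tf (m + 1) (b : ℕ) = 0 := by
          rw [tf, if_neg (by omega), if_neg (by omega), if_neg (by omega)]
          ring
        have hT : T (k + 1) ⟨m + 1, by omega⟩ b = 0 := by
          rw [T_apply]
          exact ht0
        rw [hT, zero_mul]
    · simp

def U (k : ℕ) : Matrix (Fin k) (Fin k) ℤ :=
  Matrix.of fun a i => ((T (k + 1)) ^ (i : ℕ)) a.castSucc 0

lemma det_U : (U k).det = 1 := by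
  rw [Matrix.det_of_upperTriangular]
  · have hdiag : ∀ i : Fin k, U k i i = 1 := by
      intro i
      show ((T (k + 1)) ^ (i : ℕ)) i.castSucc 0 = 1
      have hc : i.castSucc = (⟨(i : ℕ), by omega⟩ : Fin (k + 1)) := Fin.ext rfl
      rw [hc]
      exact T_pow_apply_one (by omega)
    rw [Finset.prod_congr rfl (fun i _ => hdiag i)]
    simp
  · intro i j hij
    show ((T (k + 1)) ^ (j : ℕ)) i.castSucc 0 = 0
    exact T_pow_apply_zero (by simpa using hij)

lemma T_pow_symm (n : ℕ) : ((T (k + 1)) ^ n)ᵀ = (T (k + 1)) ^ n := by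
  rw [Matrix.transpose_pow, T_symm]

lemma hankel_eq (n : ℕ) :
    Matrix.of (fun i j : Fin k => ((T (k + 1)) ^ (n + (i : ℕ) + (j : ℕ))) 0 0)
      = (U k)ᵀ * blk ((T (k + 1)) ^ n) * U k := by
  ext i j
  have hsym : ∀ (m : ℕ) (a : Fin (k+1)),
      ((T (k + 1)) ^ m) 0 a = ((T (k + 1)) ^ m) a 0 := by
    intro m a
    conv_lhs => rw [← T_pow_symm m]
    rfl
  have hexp : (T (k + 1)) ^ (n + (i : ℕ) + (j : ℕ))
      = (T (k + 1)) ^ (i : ℕ) * ((T (k + 1)) ^ n * (T (k + 1)) ^ (j : ℕ)) := by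
    rw [← pow_add, ← pow_add]
    ring_nf
  show ((T (k + 1)) ^ (n + (i : ℕ) + (j : ℕ))) 0 0 = _
  rw [hexp, Matrix.mul_apply]
  have hR : ((U k)ᵀ * blk ((T (k + 1)) ^ n) * U k) i j
      = ∑ b : Fin k, ∑ a : Fin k,
          U k a i * blk ((T (k+1))^n) a b * U k b j := by
    rw [Matrix.mul_apply]
    refine Finset.sum_congr rfl fun b _ => ?_
    rw [Matrix.mul_apply, Finset.sum_mul]
    refine Finset.sum_congr rfl fun a _ => ?_
    rw [Matrix.transpose_apply]
  have hL : (∑ a : Fin (k+1),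
        ((T (k+1))^(i : ℕ)) 0 a * ((T (k+1))^n * (T (k+1))^(j : ℕ)) a 0)
      = ∑ a : Fin k, ∑ b : Fin k,
          U k a i * blk ((T (k+1))^n) a b * U k b j := by
    have step1 : (∑ a : Fin (k+1),
          ((T (k+1))^(i : ℕ)) 0 a * ((T (k+1))^n * (T (k+1))^(j : ℕ)) a 0)
        = ∑ a : Fin (k+1), ((T (k+1))^(i : ℕ)) a 0
            * ∑ b : Fin (k+1), ((T (k+1))^n) a b * ((T (k+1))^(j : ℕ)) b 0 := by
      refine Finset.sum_congr rfl fun a _ => ?_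
      rw [hsym (i : ℕ) a, Matrix.mul_apply]
    rw [step1, Fin.sum_univ_castSucc,
      T_pow_apply_zero (a := Fin.last k) (by simpa using i.isLt), zero_mul, add_zero]
    refine Finset.sum_congr rfl fun a _ => ?_
    rw [Fin.sum_univ_castSucc,
      T_pow_apply_zero (a := Fin.last k) (by simpa using j.isLt), mul_zero, add_zero,
      Finset.mul_sum]
    refine Finset.sum_congr rfl fun b _ => ?_
    rw [mul_assoc]
    rfl
  rw [hL, hR]
  exact Finset.sum_comm

lemma T_pow_mulVec_wv (hk : 1 ≤ k) (hk3 : k % 3 = 1) {n : ℕ} (hn : 1 ≤ n) :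
    ((T (k + 1)) ^ n).mulVec (fun i => wv (i : ℕ)) = 0 := by
  obtain ⟨m, rfl⟩ : ∃ m, n = m + 1 := ⟨n - 1, by omega⟩
  rw [pow_succ, ← Matrix.mulVec_mulVec, T_mulVec_wv hk hk3, Matrix.mulVec_zero]

lemma vecMul_wv_T (hk : 1 ≤ k) (hk3 : k % 3 = 1) :
    Matrix.vecMul (fun i : Fin (k+1) => wv (i : ℕ)) (T (k + 1)) = 0 := by
  rw [← T_symm, Matrix.vecMul_transpose, T_mulVec_wv hk hk3]

lemma det_blk_pow (hk : 1 ≤ k) (hk3 : k % 3 = 1) :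
    ∀ n, 1 ≤ n → (blk ((T (k + 1)) ^ n)).det
      = (-1 : ℤ) ^ ((k / 3) * n) * ((2 * (k / 3) + 2 : ℕ) : ℤ) ^ (n - 1) := by
  intro n hn
  induction n with
  | zero => omega
  | succ n ih =>
    rcases Nat.eq_or_lt_of_le hn with h1 | h1
    · have hn0 : n = 0 := by omega
      subst hn0
      rw [pow_one, blk_T]
      obtain ⟨t, rfl⟩ : ∃ t, k = 3 * t + 1 := ⟨k / 3, by omega⟩
      have ht : (3 * t + 1) / 3 = t := by omega
      rw [detT_31 t, ht]
      simp
    · have hn' : 1 ≤ n := by omega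
      rw [pow_succ, blk_mul hk3 _ _ (T_pow_mulVec_wv hk hk3 hn') (vecMul_wv_T hk hk3),
        Matrix.det_mul, Matrix.det_mul, ih hn', det_one_add hk3, blk_T]
      obtain ⟨t, hkt⟩ : ∃ t, k = 3 * t + 1 := ⟨k / 3, by omega⟩
      have ht : k / 3 = t := by omega
      have hdet : (T k).det = (-1 : ℤ) ^ t := by rw [hkt]; exact detT_31 t
      rw [hdet, ht]
      have e1 : n + 1 - 1 = (n - 1) + 1 := by omega
      have e2 : t * (n + 1) = t * n + t := by ring
      rw [e1, e2, pow_add, pow_add, pow_succ]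
      ring

end S17

/-- Theorem 54: for `k ≡ 1 (mod 3)`,
`det(M_{n+i+j}^{(k)})_{0≤i,j≤k−1} = (−1)^{n⌊(k+1)/3⌋} ((2k+4)/3)^{n−1}`. -/
theorem statement17 (n k : ℕ) (hn : 1 ≤ n) (hk : 1 ≤ k) (hk3 : k % 3 = 1) :
    Matrix.det (Matrix.of fun i j : Fin k =>
        (motzkinCount k (n + (i : ℕ) + (j : ℕ)) : ℤ))
      = (-1) ^ (n * ((k + 1) / 3)) * (((2 * k + 4) / 3 : ℕ) : ℤ) ^ (n - 1) := by
  have hmat : (Matrix.of fun i j : Fin k => (motzkinCount k (n + (i : ℕ) + (j : ℕ)) : ℤ))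
      = Matrix.of (fun i j : Fin k => ((S17.T (k + 1)) ^ (n + (i : ℕ) + (j : ℕ))) 0 0) := by
    ext i j
    simp only [Matrix.of_apply]
    exact S17.motzkin_eq_T _
  rw [hmat, S17.hankel_eq, Matrix.det_mul, Matrix.det_mul, Matrix.det_transpose, S17.det_U,
    S17.det_blk_pow hk hk3 n hn]
  have e1 : (k + 1) / 3 = k / 3 := by omega
  have e2 : (2 * k + 4) / 3 = 2 * (k / 3) + 2 := by omega
  rw [e1, e2, Nat.mul_comm n (k / 3)]
  ring
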